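/- arXiv:1401.7633 — 2 statements merged into one kernel-verified Lean document; each statement's English description precedes it below -/
import Mathlib

section
/- Let ξ ∈ L^∞(𝕋) be real-valued and T_ξ : H² → H², F ↦ P₊(ξ F), the Toeplitz operator with symbol ξ. If μ ∈ ℝ is such that T_ξ - μ I is invertible on H², then ξ - μ has constant sign a.e. on 𝕋 (either ξ - μ > 0 a.e. or ξ - μ < 0 a.e.). Consequently, the spectrum of T_ξ equals [ess inf ξ, ess sup ξ]. -/
/-!
If `T_ξ - c` is invertible, there is `f ∈ H²` with `P₊((ξ - c) f) = 1`, so `F = (ξ - c) f`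
satisfies `⟪g, F⟫ = conj ĝ(0)` for every `g ∈ H²`. For `n > 0` the `n`-th Fourier coefficient of
the real function `(ξ - c)|f|² = conj f · F` is `⟪zⁿ f, F⟫ = conj f̂(-n) = 0`, and by reality so is
the `(-n)`-th. By uniqueness of Fourier coefficients of `L¹` functions, `(ξ - c)|f|²` is a.e. a
constant, which is nonzero because `⟪1, F⟫ = 1`; hence `ξ - c` has constant sign.

`T_ξ` is self-adjoint with `ess inf ξ ≤ T_ξ ≤ ess sup ξ` in the Loewner order, so its spectrum lies
in `[ess inf ξ, ess sup ξ]`; by the first part it contains the open interval, and it is closed and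
nonempty.
-/
open MeasureTheory Complex
open scoped Real ENNReal
noncomputable section

instance : Fact (0 < 2 * π) := ⟨by positivity⟩
/-- The unit circle, as `ℝ / 2πℤ`. -/
abbrev Circ := AddCircle (2 * π)
/-- Normalized arclength (Haar) measure on the circle. -/
abbrev μm : Measure Circ := AddCircle.haarAddCircle
/-- Membership in the Hardy space `H²`. -/
def Hardy (f : Lp ℂ 2 μm) : Prop := ∀ n : ℤ, n < 0 → fourierCoeff (⇑f) n = 0

open scoped ComplexConjugate InnerProductSpace BoundedContinuousFunction
open AddCircle (haarAddCircle)

section Uniqueness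

theorem ae_eq_zero_of_forall_integral_mul_eq_zero {X : Type*} [MeasurableSpace X]
    [TopologicalSpace X] [HasOuterApproxClosed X] [BorelSpace X] {μ : Measure X} {g : X → ℝ}
    (hg : Integrable g μ) (h : ∀ φ : X →ᵇ ℝ, ∫ x, φ x * g x ∂μ = 0) : g =ᵐ[μ] 0 := by
  -- the finite measures `g⁺ μ` and `g⁻ μ` integrate all bounded continuous functions alike
  set gp : X → ℝ≥0∞ := fun x => ENNReal.ofReal (g x)
  set gm : X → ℝ≥0∞ := fun x => ENNReal.ofReal (-g x)
  have hgp : AEMeasurable gp μ := hg.1.aemeasurable.ennreal_ofReal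
  have hgm : AEMeasurable gm μ := hg.1.aemeasurable.neg.ennreal_ofReal
  have : IsFiniteMeasure (μ.withDensity gp) := isFiniteMeasure_withDensity_ofReal hg.2
  have : IsFiniteMeasure (μ.withDensity gm) := isFiniteMeasure_withDensity_ofReal hg.neg.2
  have hint (ψ : X → ℝ) (φ : X →ᵇ ℝ) (hψ : Integrable ψ μ) :
      Integrable (fun x => φ x * ψ x) μ :=
    hψ.bdd_mul φ.continuous.aestronglyMeasurable (.of_forall φ.norm_coe_le_norm)
  have heq : μ.withDensity gp = μ.withDensity gm := by
    refine ext_of_forall_integral_eq_of_IsFiniteMeasure fun φ => ?_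
    rw [integral_withDensity_eq_integral_toReal_smul₀ hgp (.of_forall fun _ => ENNReal.ofReal_lt_top),
      integral_withDensity_eq_integral_toReal_smul₀ hgm (.of_forall fun _ => ENNReal.ofReal_lt_top),
      ← sub_eq_zero, ← integral_sub, ← h φ]
    · congr 1 with x
      simp only [gp, gm, ENNReal.toReal_ofReal', smul_eq_mul]
      rcases le_total 0 (g x) with hx | hx <;> simp [hx, mul_comm]
    · simpa [gp, ENNReal.toReal_ofReal', mul_comm] using hint _ φ hg.pos_part
    · simpa [gm, ENNReal.toReal_ofReal', mul_comm] using hint _ φ hg.neg.pos_part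
  rw [withDensity_eq_iff hgp hgm hg.lintegral_lt_top.ne] at heq
  filter_upwards [heq] with x hx
  have := congrArg ENNReal.toReal hx
  simp only [gp, gm, ENNReal.toReal_ofReal'] at this
  rcases le_total 0 (g x) with hx | hx <;> simp_all

variable {T : ℝ} [Fact (0 < T)]

theorem integral_mul_eq_zero_of_fourierCoeff_eq_zero {f : AddCircle T → ℂ}
    (hf : Integrable f haarAddCircle) (h0 : ∀ n, fourierCoeff f n = 0)
    (φ : C(AddCircle T, ℂ)) : ∫ x, φ x * f x ∂haarAddCircle = 0 := by
  have hint (ψ : C(AddCircle T, ℂ)) : Integrable (fun x => ψ x * f x) haarAddCircle :=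
    hf.bdd_mul ψ.continuous.aestronglyMeasurable (.of_forall ψ.norm_coe_le_norm)
  let L : C(AddCircle T, ℂ) →L[ℂ] ℂ := LinearMap.mkContinuous
    { toFun := fun ψ => ∫ x, ψ x * f x ∂haarAddCircle
      map_add' := fun ψ χ => by
        simp only [ContinuousMap.add_apply, add_mul, integral_add (hint ψ) (hint χ)]
      map_smul' := fun c ψ => by
        simp only [ContinuousMap.smul_apply, smul_eq_mul, mul_assoc, integral_const_mul,
          RingHom.id_apply] }
    (∫ x, ‖f x‖ ∂haarAddCircle) fun ψ => by
      refine (norm_integral_le_of_norm_le (hf.norm.const_mul ‖ψ‖)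
        (.of_forall fun x => ?_)).trans_eq ?_
      · rw [norm_mul]; gcongr; exact ψ.norm_coe_le_norm x
      · simp only [integral_const_mul]; ring
  have hL : L = 0 := by
    refine ContinuousLinearMap.ext_on
      (Submodule.dense_iff_topologicalClosure_eq_top.mpr span_fourier_closure_eq_top) ?_
    rintro - ⟨n, rfl⟩
    have := h0 (-n)
    simp only [fourierCoeff, neg_neg, smul_eq_mul] at this
    exact this
  exact congrArg (· φ) hL

theorem ae_eq_zero_of_fourierCoeff_eq_zero {f : AddCircle T → ℂ}
    (hf : Integrable f haarAddCircle) (h0 : ∀ n, fourierCoeff f n = 0) :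
    f =ᵐ[haarAddCircle] 0 := by
  have key (φ : AddCircle T →ᵇ ℝ) :
      Integrable (fun x => (φ x : ℂ) * f x) haarAddCircle ∧
        ∫ x, (φ x : ℂ) * f x ∂haarAddCircle = 0 :=
    ⟨hf.bdd_mul (by fun_prop) (.of_forall fun x => by simpa using φ.norm_coe_le_norm x),
      integral_mul_eq_zero_of_fourierCoeff_eq_zero hf h0 ⟨fun x => (φ x : ℂ), by fun_prop⟩⟩
  have hre : (fun x => (f x).re) =ᵐ[haarAddCircle] 0 :=
    ae_eq_zero_of_forall_integral_mul_eq_zero hf.re fun φ => by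
      simpa [(key φ).2] using integral_re (key φ).1
  have him : (fun x => (f x).im) =ᵐ[haarAddCircle] 0 :=
    ae_eq_zero_of_forall_integral_mul_eq_zero hf.im fun φ => by
      simpa [(key φ).2] using integral_im (key φ).1
  filter_upwards [hre, him] with x h1 h2
  exact Complex.ext h1 h2

theorem ae_eq_const_of_fourierCoeff_eq_zero {f : AddCircle T → ℂ}
    (hf : Integrable f haarAddCircle) (h0 : ∀ n ≠ 0, fourierCoeff f n = 0) :
    f =ᵐ[haarAddCircle] fun _ => fourierCoeff f 0 := by
  set c := fourierCoeff f 0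
  have hc : f - (fun _ => c) = f + (-c) • ⇑(fourier 0 : C(AddCircle T, ℂ)) := by
    ext x; simp [sub_eq_add_neg]
  have hint : Integrable ((-c) • ⇑(fourier 0 : C(AddCircle T, ℂ))) haarAddCircle :=
    (integrable_const (-c)).congr (.of_forall fun x => by simp)
  have := ae_eq_zero_of_fourierCoeff_eq_zero (hf.sub (integrable_const c)) fun n => by
    rw [hc, fourierCoeff.add hf hint, Pi.add_apply, fourierCoeff.const_smul, fourierCoeff_fourier]
    rcases eq_or_ne n 0 with rfl | hn
    · simp [c]
    · simp [h0 n hn, hn]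
  filter_upwards [this] with x hx
  exact sub_eq_zero.mp hx

end Uniqueness

section FourierL2

variable {T : ℝ} [Fact (0 < T)]

theorem inner_fourierLp_eq_fourierCoeff (f : Lp ℂ 2 (haarAddCircle (T := T))) (n : ℤ) :
    ⟪fourierLp 2 n, f⟫_ℂ = fourierCoeff f n := by
  rw [← fourierBasis_repr, HilbertBasis.repr_apply_apply, coe_fourierBasis]

theorem fourierCoeff_fourierLp (n : ℤ) :
    fourierCoeff (fourierLp (T := T) 2 n) = Pi.single n 1 := by
  rw [fourierCoeff_congr_ae (coeFn_fourierLp 2 n), fourierCoeff_fourier]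

theorem coeFn_fourierLp_smul (n : ℤ) (f : Lp ℂ 2 (haarAddCircle (T := T))) :
    (fourierLp (T := T) ∞ n • f : Lp ℂ 2 haarAddCircle)
      =ᵐ[haarAddCircle] fun x => fourier n x * f x :=
  (Lp.coeFn_lpSMul _ f).trans ((coeFn_fourierLp ∞ n).smul (.refl _ _))

theorem fourierCoeff_fourierLp_smul (n : ℤ) (f : Lp ℂ 2 (haarAddCircle (T := T))) (m : ℤ) :
    fourierCoeff (fourierLp (T := T) ∞ n • f) m = fourierCoeff f (m - n) := by
  rw [fourierCoeff_congr_ae (coeFn_fourierLp_smul n f)]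
  refine integral_congr_ae (.of_forall fun x => ?_)
  simp only [smul_eq_mul]
  rw [show -(m - n) = -m + n by ring, fourier_add]
  ring

theorem fourierCoeff_conj_mul (f g : Lp ℂ 2 (haarAddCircle (T := T))) (n : ℤ) :
    fourierCoeff (fun x => conj (f x) * g x) n
      = ⟪(fourierLp (T := T) ∞ n • f : Lp ℂ 2 haarAddCircle), g⟫_ℂ := by
  rw [L2.inner_def]
  refine integral_congr_ae ?_
  filter_upwards [coeFn_fourierLp_smul n f] with x hx
  simp only [hx, smul_eq_mul, RCLike.inner_apply, map_mul, fourier_neg]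
  ring

theorem fourierCoeff_ofReal_neg (h : AddCircle T → ℝ) (n : ℤ) :
    fourierCoeff (fun x => (h x : ℂ)) (-n) = conj (fourierCoeff (fun x => (h x : ℂ)) n) := by
  simp only [fourierCoeff, ← integral_conj, smul_eq_mul, map_mul, conj_ofReal, fourier_neg]

theorem ae_eq_const_of_fourierCoeff_ofReal_eq_zero {h : AddCircle T → ℝ}
    (hh : Integrable h haarAddCircle)
    (h0 : ∀ n > 0, fourierCoeff (fun x => (h x : ℂ)) n = 0) :
    h =ᵐ[haarAddCircle] fun _ => (fourierCoeff (fun x => (h x : ℂ)) 0).re := by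
  have hhC : Integrable (fun x => (h x : ℂ)) haarAddCircle := hh.ofReal
  have hconst := ae_eq_const_of_fourierCoeff_eq_zero hhC fun n hn => by
    rcases hn.lt_or_gt with hn | hn
    · rw [← neg_neg n, fourierCoeff_ofReal_neg, h0 (-n) (by omega), map_zero]
    · exact h0 n hn
  have hreal := conj_eq_iff_re.mp (by simpa using (fourierCoeff_ofReal_neg h 0).symm)
  filter_upwards [hconst] with x hx
  exact_mod_cast hx.trans hreal.symm

end FourierL2

theorem MeasureTheory.MemLp.isBoundedUnder_ae_abs {α : Type*} [MeasurableSpace α]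
    {μ : Measure α} {f : α → ℝ} (hf : MemLp f ∞ μ) :
    Filter.IsBoundedUnder (· ≤ ·) (ae μ) fun x => |f x| := by
  obtain ⟨C, hC⟩ := eLpNormEssSup_lt_top_iff_isBoundedUnder.mp
    (eLpNorm_exponent_top (f := f) ▸ hf.eLpNorm_lt_top)
  refine ⟨C, Filter.eventually_map.mpr ?_⟩
  filter_upwards [Filter.eventually_map.mp hC] with x hx
  exact_mod_cast hx

section Multiplier

variable {α : Type*} [MeasurableSpace α] {μ : Measure α} {η : α → ℝ}

theorem inner_eq_inner_of_ae_eq_mul {f g F G : Lp ℂ 2 μ}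
    (hF : F =ᵐ[μ] fun x => (η x : ℂ) * f x) (hG : G =ᵐ[μ] fun x => (η x : ℂ) * g x) :
    ⟪F, g⟫_ℂ = ⟪f, G⟫_ℂ := by
  rw [L2.inner_def, L2.inner_def]
  refine integral_congr_ae ?_
  filter_upwards [hF, hG] with x hFx hGx
  simp only [hFx, hGx, RCLike.inner_apply, map_mul, conj_ofReal]
  ring

theorem re_inner_nonneg_of_ae_eq_mul {f F : Lp ℂ 2 μ}
    (hF : F =ᵐ[μ] fun x => (η x : ℂ) * f x) (hη : ∀ᵐ x ∂μ, 0 ≤ η x) : 0 ≤ re ⟪F, f⟫_ℂ := by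
  rw [L2.inner_def, ← RCLike.re_to_complex, ← integral_re (L2.integrable_inner F f)]
  refine integral_nonneg_of_ae ?_
  filter_upwards [hF, hη] with x hFx hηx
  have hx : ⟪F x, f x⟫_ℂ = ((η x * ‖f x‖ ^ 2 : ℝ) : ℂ) := by
    rw [hFx, RCLike.inner_apply, map_mul, conj_ofReal, mul_left_comm, mul_conj']
    push_cast
    ring
  simp only [hx, Pi.zero_apply, RCLike.re_to_complex, ofReal_re]
  positivity

end Multiplier

section Hardy

theorem Hardy.fourierLp_smul {f : Lp ℂ 2 μm} (hf : Hardy f) {n : ℤ} (hn : 0 ≤ n) :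
    Hardy (fourierLp (T := 2 * π) ∞ n • f) := fun m hm => by
  rw [fourierCoeff_fourierLp_smul]
  exact hf _ (by omega)

theorem hardy_fourierLp {n : ℤ} (hn : 0 ≤ n) : Hardy (fourierLp 2 n) := fun m hm => by
  rw [fourierCoeff_fourierLp, Pi.single_eq_of_ne (by omega)]

theorem fourierCoeff_conj_mul_eq_zero {f F : Lp ℂ 2 μm} (hf : Hardy f)
    (hF : ∀ g, Hardy g → ⟪g, F⟫_ℂ = conj (fourierCoeff g 0)) {n : ℤ} (hn : 0 < n) :
    fourierCoeff (fun x => conj (f x) * F x) n = 0 := by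
  rw [fourierCoeff_conj_mul, hF _ (hf.fourierLp_smul hn.le), fourierCoeff_fourierLp_smul,
    zero_sub, hf _ (by omega), map_zero]

theorem ae_pos_or_ae_neg_of_inner_eq_conj_fourierCoeff {η : Circ → ℝ} {f F : Lp ℂ 2 μm}
    (hf : Hardy f) (hF : F =ᵐ[μm] fun x => (η x : ℂ) * f x)
    (hFg : ∀ g, Hardy g → ⟪g, F⟫_ℂ = conj (fourierCoeff g 0)) :
    (∀ᵐ x ∂μm, 0 < η x) ∨ (∀ᵐ x ∂μm, η x < 0) := by
  set h : Circ → ℝ := fun x => η x * ‖f x‖ ^ 2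
  have hh : (fun x => (h x : ℂ)) =ᵐ[μm] fun x => conj (f x) * F x := by
    filter_upwards [hF] with x hx
    rw [hx, mul_left_comm, conj_mul']
    push_cast [h]
    ring
  have hint : Integrable h μm := by
    simpa using ((L2.integrable_inner (𝕜 := ℂ) f F).congr (hh.symm.mono fun x hx =>
      (RCLike.inner_apply _ _).trans ((mul_comm _ _).trans hx))).re
  set K := (fourierCoeff (fun x => (h x : ℂ)) 0).re
  have hreal : ∀ᵐ x ∂μm, h x = K := ae_eq_const_of_fourierCoeff_ofReal_eq_zero hint fun n hn => by
    rw [fourierCoeff_congr_ae hh, fourierCoeff_conj_mul_eq_zero hf hFg hn]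
  have hK : K ≠ 0 := by
    intro hK0
    have hF0 : F = 0 := by
      rw [Lp.eq_zero_iff_ae_eq_zero]
      filter_upwards [hF, hreal] with x hFx hx
      rcases mul_eq_zero.mp (hx.trans hK0) with hη | hf0
      · simp [hFx, hη]
      · simp [hFx, norm_eq_zero.mp (pow_eq_zero_iff two_ne_zero |>.mp hf0)]
    have := hFg _ (hardy_fourierLp le_rfl)
    rw [hF0, inner_zero_right, fourierCoeff_fourierLp, Pi.single_eq_same, map_one] at this
    exact zero_ne_one this
  rcases hK.lt_or_gt with hK | hK
  · exact .inr (hreal.mono fun x hx => neg_of_mul_neg_left (hx ▸ hK) (sq_nonneg _))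
  · exact .inl (hreal.mono fun x hx => pos_of_mul_pos_left (hx ▸ hK) (sq_nonneg _))

end Hardy

section Toeplitz

variable {P : Lp ℂ 2 μm →L[ℂ] Lp ℂ 2 μm}

theorem inner_proj_left_of_hardy (hPorth : ∀ f g : Lp ℂ 2 μm, Hardy g → ⟪f - P f, g⟫_ℂ = 0)
    (f : Lp ℂ 2 μm) {g : Lp ℂ 2 μm} (hg : Hardy g) : ⟪P f, g⟫_ℂ = ⟪f, g⟫_ℂ := by
  rw [← sub_eq_zero, ← inner_sub_left, ← neg_sub, inner_neg_left, hPorth f g hg, neg_zero]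

theorem inner_proj_right_of_hardy (hPorth : ∀ f g : Lp ℂ 2 μm, Hardy g → ⟪f - P f, g⟫_ℂ = 0)
    (f : Lp ℂ 2 μm) {g : Lp ℂ 2 μm} (hg : Hardy g) : ⟪g, P f⟫_ℂ = ⟪g, f⟫_ℂ := by
  rw [← inner_conj_symm, inner_proj_left_of_hardy hPorth f hg, inner_conj_symm]

variable {H : Type*} [NormedAddCommGroup H] [InnerProductSpace ℂ H]

def IsToeplitz (e : H →ₗᵢ[ℂ] Lp ℂ 2 μm) (P : Lp ℂ 2 μm →L[ℂ] Lp ℂ 2 μm) (η : Circ → ℝ)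
    (S : H →L[ℂ] H) : Prop :=
  ∀ u, ∃ F : Lp ℂ 2 μm, F =ᵐ[μm] (fun x => (η x : ℂ) * e u x) ∧ e (S u) = P F

namespace IsToeplitz

variable {e : H →ₗᵢ[ℂ] Lp ℂ 2 μm} {η : Circ → ℝ} {S : H →L[ℂ] H}
  (hrange : ∀ u, Hardy (e u))
  (hPorth : ∀ f g : Lp ℂ 2 μm, Hardy g → ⟪f - P f, g⟫_ℂ = 0)
include hrange hPorth

theorem isSelfAdjoint [CompleteSpace H] (hS : IsToeplitz e P η S) : IsSelfAdjoint S := by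
  rw [ContinuousLinearMap.isSelfAdjoint_iff_isSymmetric]
  intro u v
  obtain ⟨F, hF, hSu⟩ := hS u
  obtain ⟨G, hG, hSv⟩ := hS v
  calc ⟪S u, v⟫_ℂ = ⟪e (S u), e v⟫_ℂ := (e.inner_map_map _ _).symm
    _ = ⟪F, e v⟫_ℂ := by rw [hSu, inner_proj_left_of_hardy hPorth F (hrange v)]
    _ = ⟪e u, G⟫_ℂ := inner_eq_inner_of_ae_eq_mul hF hG
    _ = ⟪e u, e (S v)⟫_ℂ := by rw [hSv, inner_proj_right_of_hardy hPorth G (hrange u)]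
    _ = ⟪u, S v⟫_ℂ := e.inner_map_map _ _

theorem isPositive [CompleteSpace H] (hS : IsToeplitz e P η S) (hη : ∀ᵐ x ∂μm, 0 ≤ η x) :
    S.IsPositive := by
  refine ContinuousLinearMap.isPositive_def'.mpr ⟨hS.isSelfAdjoint hrange hPorth, fun u => ?_⟩
  obtain ⟨F, hF, hSu⟩ := hS u
  rw [ContinuousLinearMap.reApplyInnerSelf_apply, ← e.inner_map_map, hSu,
    inner_proj_left_of_hardy hPorth F (hrange u)]
  exact re_inner_nonneg_of_ae_eq_mul hF hη

omit hPorth in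
theorem sub_algebraMap (hS : IsToeplitz e P η S) (hPfix : ∀ f, Hardy f → P f = f) (a : ℝ) :
    IsToeplitz e P (fun x => η x - a) (S - algebraMap ℝ (H →L[ℂ] H) a) := fun u => by
  obtain ⟨F, hF, hSu⟩ := hS u
  refine ⟨F - (a : ℂ) • e u, ?_, ?_⟩
  · filter_upwards [hF, Lp.coeFn_sub F ((a : ℂ) • e u), Lp.coeFn_smul (a : ℂ) (e u)]
      with x h1 h2 h3
    simp only [h1, h2, h3, Pi.sub_apply, Pi.smul_apply, smul_eq_mul]
    push_cast
    ring
  · simp [Algebra.algebraMap_eq_smul_one, hSu, hPfix _ (hrange u), ← Complex.coe_smul]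

omit hrange hPorth in
theorem neg (hS : IsToeplitz e P η S) : IsToeplitz e P (fun x => -η x) (-S) := fun u => by
  obtain ⟨F, hF, hSu⟩ := hS u
  refine ⟨-F, ?_, by simp [hSu]⟩
  filter_upwards [hF, Lp.coeFn_neg F] with x h1 h2
  simp only [h2, Pi.neg_apply, h1, ofReal_neg, neg_mul]

theorem ae_pos_or_ae_neg [CompleteSpace H] (hS : IsToeplitz e P η S)
    (honto : ∀ f, Hardy f → ∃ u, e u = f) (hunit : IsUnit S) :
    (∀ᵐ x ∂μm, 0 < η x) ∨ (∀ᵐ x ∂μm, η x < 0) := by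
  obtain ⟨u₁, hu₁⟩ := honto _ (hardy_fourierLp le_rfl)
  obtain ⟨u, hu⟩ := (ContinuousLinearMap.isUnit_iff_bijective.mp hunit).2 u₁
  obtain ⟨F, hF, hSu⟩ := hS u
  refine ae_pos_or_ae_neg_of_inner_eq_conj_fourierCoeff (hrange u) hF fun g hg => ?_
  rw [← inner_proj_right_of_hardy hPorth F hg, ← hSu, hu, hu₁, ← inner_conj_symm,
    inner_fourierLp_eq_fourierCoeff]

theorem ae_sub_pos_or_ae_sub_neg [CompleteSpace H] (hS : IsToeplitz e P η S)
    (honto : ∀ f, Hardy f → ∃ u, e u = f) (hPfix : ∀ f, Hardy f → P f = f) {c : ℝ}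
    (hc : c ∉ spectrum ℝ S) : (∀ᵐ x ∂μm, 0 < η x - c) ∨ (∀ᵐ x ∂μm, η x - c < 0) :=
  (hS.sub_algebraMap hrange hPfix c).ae_pos_or_ae_neg hrange hPorth honto
    (IsUnit.sub_iff.mp (spectrum.notMem_iff.mp hc))

theorem spectrum_subset_Icc [CompleteSpace H] (hS : IsToeplitz e P η S)
    (hPfix : ∀ f, Hardy f → P f = f) {a b : ℝ} (ha : ∀ᵐ x ∂μm, a ≤ η x)
    (hb : ∀ᵐ x ∂μm, η x ≤ b) : spectrum ℝ S ⊆ Set.Icc a b := by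
  have hsa := hS.isSelfAdjoint hrange hPorth
  have hle_a : algebraMap ℝ (H →L[ℂ] H) a ≤ S :=
    (hS.sub_algebraMap hrange hPfix a).isPositive hrange hPorth
      (ha.mono fun x hx => sub_nonneg.mpr hx)
  have hle_b : S ≤ algebraMap ℝ (H →L[ℂ] H) b := by
    rw [ContinuousLinearMap.le_def, ← neg_sub]
    exact (hS.sub_algebraMap hrange hPfix b).neg.isPositive hrange hPorth
      (hb.mono fun x hx => by linarith)
  exact fun x hx => ⟨(algebraMap_le_iff_le_spectrum hsa).mp hle_a x hx,
    (le_algebraMap_iff_spectrum_le hsa).mp hle_b x hx⟩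

theorem spectrum_eq_Icc [CompleteSpace H] (hS : IsToeplitz e P η S)
    (honto : ∀ f, Hardy f → ∃ u, e u = f) (hPfix : ∀ f, Hardy f → P f = f)
    (hη : MemLp η ∞ μm) :
    spectrum ℝ S = Set.Icc (essInf η μm) (essSup η μm) := by
  obtain ⟨hle, hge⟩ := Filter.isBoundedUnder_le_abs.mp hη.isBoundedUnder_ae_abs
  have hsub := hS.spectrum_subset_Icc hrange hPorth hPfix (ae_essInf_le hge) (ae_le_essSup hle)
  have hIoo : Set.Ioo (essInf η μm) (essSup η μm) ⊆ spectrum ℝ S := fun c ⟨hac, hcb⟩ => by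
    by_contra hc
    rcases hS.ae_sub_pos_or_ae_sub_neg hrange hPorth honto hPfix hc with h | h
    · exact hac.not_ge (le_essInf_of_ae_le c (h.mono fun x hx => by linarith)
        hle.isCoboundedUnder_ge)
    · exact hcb.not_ge (essSup_le_of_ae_le c (h.mono fun x hx => by linarith)
        hge.isCoboundedUnder_le)
  have : Nontrivial H := by
    obtain ⟨u₁, hu₁⟩ := honto _ (hardy_fourierLp le_rfl)
    exact ⟨u₁, 0, fun h => orthonormal_fourier.ne_zero 0 (by rw [← hu₁, h, map_zero])⟩
  obtain ⟨c, hc⟩ :=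
    ContinuousFunctionalCalculus.spectrum_nonempty (R := ℝ) S (hS.isSelfAdjoint hrange hPorth)
  refine hsub.antisymm ?_
  rcases ((hsub hc).1.trans (hsub hc).2).eq_or_lt with heq | hlt
  · have hca : c = essInf η μm := le_antisymm (heq ▸ (hsub hc).2) (hsub hc).1
    rwa [← heq, Set.Icc_self, Set.singleton_subset_iff, ← hca]
  · rw [← closure_Ioo hlt.ne]
    exact closure_minimal hIoo (spectrum.isClosed S)

end IsToeplitz

end Toeplitz

theorem hartman_wintner_general {H : Type} [NormedAddCommGroup H] [InnerProductSpace ℂ H]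
    [CompleteSpace H]
    (e : H →ₗᵢ[ℂ] Lp ℂ 2 μm)
    (hrange : ∀ u : H, Hardy (e u))
    (honto : ∀ f : Lp ℂ 2 μm, Hardy f → ∃ u : H, e u = f)
    (ξ : Circ → ℝ) (hξ : MemLp ξ ⊤ μm)
    (P : Lp ℂ 2 μm →L[ℂ] Lp ℂ 2 μm)
    (hPfix : ∀ f, Hardy f → P f = f)
    (hPorth : ∀ f g : Lp ℂ 2 μm, Hardy g → (inner ℂ (f - P f) g : ℂ) = 0)
    (Mξ : Lp ℂ 2 μm →L[ℂ] Lp ℂ 2 μm)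
    (hMξ : ∀ g : Lp ℂ 2 μm, ⇑(Mξ g) =ᵐ[μm] fun x => (ξ x : ℂ) * g x)
    (T : H →L[ℂ] H) (hT : ∀ u : H, e (T u) = P (Mξ (e u))) :
    (∀ c : ℝ, (c : ℂ) ∉ spectrum ℂ T →
      ((∀ᵐ x ∂μm, 0 < ξ x - c) ∨ (∀ᵐ x ∂μm, ξ x - c < 0))) ∧
    spectrum ℂ T = (fun t : ℝ => (t : ℂ)) '' Set.Icc (essInf ξ μm) (essSup ξ μm) := by
  have hToep : IsToeplitz e P ξ T := fun u => ⟨Mξ (e u), hMξ (e u), hT u⟩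
  refine ⟨fun c hc => hToep.ae_sub_pos_or_ae_sub_neg hrange hPorth honto hPfix fun hc' => hc ?_, ?_⟩
  · rwa [← spectrum.preimage_algebraMap ℂ] at hc'
  · rw [← (hToep.isSelfAdjoint hrange hPorth).spectrumRestricts.algebraMap_image,
      hToep.spectrum_eq_Icc hrange hPorth honto hPfix hξ]
    rfl

/-- Hartman–Wintner theorem: for a real-valued `ξ ∈ L^∞(𝕋)`, the Toeplitz operator
`T_ξ = P₊(ξ ·)` on `H²` (realized as an operator `T` on a Hilbert space `H` isometrically
identified with `H² ⊂ L²(𝕋)`) has the property that whenever `μ ∈ ℝ` is outside its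
spectrum, `ξ - μ` has constant sign a.e.; consequently its spectrum equals
`[ess inf ξ, ess sup ξ]`. -/
theorem hartman_wintner {H : Type} [NormedAddCommGroup H] [InnerProductSpace ℂ H]
    [CompleteSpace H]
    (e : H →ₗᵢ[ℂ] Lp ℂ 2 μm)
    (hrange : ∀ u : H, Hardy (e u))
    (honto : ∀ f : Lp ℂ 2 μm, Hardy f → ∃ u : H, e u = f)
    (ξ : Circ → ℝ) (hξ : MemLp ξ ⊤ μm)
    (P : Lp ℂ 2 μm →L[ℂ] Lp ℂ 2 μm)
    (hPrange : ∀ f, Hardy (P f))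
    (hPfix : ∀ f, Hardy f → P f = f)
    (hPorth : ∀ f g : Lp ℂ 2 μm, Hardy g → (inner ℂ (f - P f) g : ℂ) = 0)
    (Mξ : Lp ℂ 2 μm →L[ℂ] Lp ℂ 2 μm)
    (hMξ : ∀ g : Lp ℂ 2 μm, ⇑(Mξ g) =ᵐ[μm] fun x => (ξ x : ℂ) * g x)
    (T : H →L[ℂ] H) (hT : ∀ u : H, e (T u) = P (Mξ (e u))) :
    (∀ c : ℝ, (c : ℂ) ∉ spectrum ℂ T →
      ((∀ᵐ x ∂μm, 0 < ξ x - c) ∨ (∀ᵐ x ∂μm, ξ x - c < 0))) ∧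
    spectrum ℂ T = (fun t : ℝ => (t : ℂ)) '' Set.Icc (essInf ξ μm) (essSup ξ μm) :=
  hartman_wintner_general e hrange honto ξ hξ P hPfix hPorth Mξ hMξ T hT
end
end

section
/- Under the bounded extremal problem hypotheses (f not the trace on I of an admissible function), the deviation M₀(μ) = ‖ψ + b g₀(μ) - h‖_{L²(J)} of the solution satisfies (μ+1)·M₀²(μ) → 0 as μ ↓ -1, and consequently M₀² is integrable near μ = -1: ∫_{-1}^{μ₀} M₀²(μ) dμ < ∞ for every μ₀ > -1. -/
open MeasureTheory Complex Filter
open scoped Real ENNReal ComplexConjugate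
noncomputable section

/-- The boundary point of the unit circle corresponding to `x`. -/
def bd (x : Circ) : ℂ := (AddCircle.toCircle x : ℂ)
/-- Boundary values of the finite Blaschke product with zeros `z j` and phase `φ₀`. -/
def blaschkeBd (N : ℕ) (z : Fin N → ℂ) (φ₀ : ℝ) (x : Circ) : ℂ :=
  Complex.exp (φ₀ * Complex.I) *
    ∏ j, (bd x - z j) / (1 - (starRingEnd ℂ) (z j) * bd x)
/-- The element `χ_J · g` of `L²`. -/
def indLp (J : Set Circ) (hJ : MeasurableSet J) (g : Lp ℂ 2 μm) : Lp ℂ 2 μm :=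
  MemLp.toLp (J.indicator ⇑g) ((Lp.memLp g).indicator hJ)

/-! With `F(μ) = e(μ) + (μ + 1) M₀²(μ)`, the balance relation says exactly `F' = M₀² ≥ 0`. So `F`
is monotone and nonnegative on `(-1, ∞)`, hence has a limit `L` at `-1`, and `M₀²` is integrable near
`-1` as a nonnegative derivative of a function with a finite one-sided limit. Since `e → 0`,
`(μ + 1) M₀²(μ) → L`; were `L ≠ 0`, `M₀²` would dominate a multiple of `1 / (μ + 1)`, which is not
integrable at `-1`. -/

section

open Set Topology

variable {a : ℝ}

theorem not_integrableAtFilter_sub_inv_nhdsGT :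
    ¬ IntegrableAtFilter (fun x : ℝ => (x - a)⁻¹) (𝓝[>] a) := by
  rintro ⟨s, hs, hint⟩
  obtain ⟨c, hac : a < c, hsub⟩ := mem_nhdsGT_iff_exists_Ioc_subset.mp hs
  have : IntervalIntegrable (fun x : ℝ => (x - a)⁻¹) volume a c :=
    (intervalIntegrable_iff_integrableOn_Ioc_of_le hac.le).mpr (hint.mono_set hsub)
  simp [hac.ne, hac.le] at this

theorem eq_zero_of_tendsto_sub_mul_of_integrableOn {f : ℝ → ℝ} {b L : ℝ} (hab : a < b)
    (hf : IntegrableOn f (Ioc a b)) (hL : Tendsto (fun t => (t - a) * f t) (𝓝[>] a) (𝓝 L)) :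
    L = 0 := by
  by_contra hL0
  have hbounded_below : (fun _ => (1 : ℝ)) =O[𝓝[>] a] fun x => (x - a) * f x :=
    (Asymptotics.isBigO_const_left_iff_pos_le_norm one_ne_zero).mpr
      ⟨‖L‖ / 2, by positivity, hL.norm.eventually (eventually_ge_nhds (by simp [hL0]))⟩
  have hbigO : (fun x : ℝ => (x - a)⁻¹) =O[𝓝[>] a] f := by
    refine (((Asymptotics.isBigO_refl (fun x : ℝ => (x - a)⁻¹) _).mul
      hbounded_below).congr_left fun x => mul_one _).congr' EventuallyEq.rfl ?_
    filter_upwards [self_mem_nhdsWithin] with x hx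
    rw [inv_mul_cancel_left₀ (sub_ne_zero.mpr (ne_of_gt hx))]
  refine not_integrableAtFilter_sub_inv_nhdsGT (hbigO.integrableAtFilter ?_ ⟨Ioc a b, ?_, hf⟩)
  · exact (measurable_id.sub_const a).inv.aestronglyMeasurable.stronglyMeasurableAtFilter
  · exact Ioc_mem_nhdsGT hab

theorem integrableOn_Ioc_of_hasDerivAt_nonneg_of_tendsto {F f : ℝ → ℝ} {b L : ℝ}
    (hF : ∀ t ∈ Ioi a, HasDerivAt F (f t) t) (hf : ∀ t ∈ Ioi a, 0 ≤ f t)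
    (hL : Tendsto F (𝓝[>] a) (𝓝 L)) : IntegrableOn f (Ioc a b) := by
  classical
  refine intervalIntegral.integrableOn_deriv_of_nonneg (g := Function.update F a L)
    (fun t ht => ?_) (fun t ht => ?_) (fun t ht => hf t ht.1)
  · rcases eq_or_lt_of_le ht.1 with rfl | hat
    · rw [continuousWithinAt_update_same]
      exact hL.mono_left (nhdsWithin_mono _ fun x hx => lt_of_le_of_ne hx.1.1 (Ne.symm hx.2))
    · rw [continuousWithinAt_update_of_ne (ne_of_gt hat)]
      exact (hF t hat).continuousAt.continuousWithinAt
  · refine (hF t ht.1).congr_of_eventuallyEq ?_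
    filter_upwards [Ioi_mem_nhds ht.1] with x hx
    exact Function.update_of_ne (ne_of_gt hx) _ _

theorem exists_tendsto_nhdsGT_of_hasDerivAt_nonneg {F f : ℝ → ℝ}
    (hF : ∀ t ∈ Ioi a, HasDerivAt F (f t) t) (hf : ∀ t ∈ Ioi a, 0 ≤ f t)
    (hbdd : BddBelow (F '' Ioi a)) : ∃ L, Tendsto F (𝓝[>] a) (𝓝 L) := by
  have hmono : MonotoneOn F (Ioi a) :=
    monotoneOn_of_hasDerivWithinAt_nonneg (convex_Ioi a)
      (fun t ht => (hF t ht).continuousAt.continuousWithinAt)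
      (fun t ht => (hF t (interior_subset ht)).hasDerivWithinAt)
      (fun t ht => hf t (interior_subset ht))
  exact ⟨_, hmono.tendsto_nhdsGT hbdd⟩

theorem tendsto_sub_mul_nhds_zero_and_integrableOn_of_balance {e M e' M' : ℝ → ℝ}
    (he₀ : ∀ t ∈ Ioi a, 0 ≤ e t) (hM₀ : ∀ t ∈ Ioi a, 0 ≤ M t)
    (he : Tendsto e (𝓝[>] a) (𝓝 0))
    (hde : ∀ t ∈ Ioi a, HasDerivAt e (e' t) t) (hdM : ∀ t ∈ Ioi a, HasDerivAt M (M' t) t)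
    (hbal : ∀ t ∈ Ioi a, e' t = -(t - a) * M' t) :
    Tendsto (fun t => (t - a) * M t) (𝓝[>] a) (𝓝 0) ∧ ∀ b, IntegrableOn M (Ioc a b) := by
  set F : ℝ → ℝ := fun t => e t + (t - a) * M t
  have hF : ∀ t ∈ Ioi a, HasDerivAt F (M t) t := fun t ht =>
    ((hde t ht).add (((hasDerivAt_id t).sub_const a).mul (hdM t ht))).congr_deriv
      (by rw [hbal t ht, id]; ring)
  have hF₀ : ∀ t ∈ Ioi a, 0 ≤ F t := fun t ht =>
    add_nonneg (he₀ t ht) (mul_nonneg (sub_nonneg.mpr (le_of_lt ht)) (hM₀ t ht))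
  obtain ⟨L, hL⟩ := exists_tendsto_nhdsGT_of_hasDerivAt_nonneg hF hM₀
    ⟨0, forall_mem_image.mpr hF₀⟩
  have hint : ∀ b, IntegrableOn M (Ioc a b) := fun b =>
    integrableOn_Ioc_of_hasDerivAt_nonneg_of_tendsto hF hM₀ hL
  have hprod : Tendsto (fun t => (t - a) * M t) (𝓝[>] a) (𝓝 L) := by
    simpa [F] using hL.sub he
  obtain rfl := eq_zero_of_tendsto_sub_mul_of_integrableOn (lt_add_one a) (hint _) hprod
  exact ⟨hprod, hint⟩

end

theorem bep_M0_integrable_general (N : ℕ) (zs : Fin N → ℂ) (φ₀ : ℝ) (I : Set Circ) (ψ : Lp ℂ 2 μm)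
    (f h : Circ → ℂ) (g0 : ℝ → Lp ℂ 2 μm) (e M0sq : ℝ → ℝ)
    (he : ∀ t, e t = ∫ x in I, ‖ψ x + blaschkeBd N zs φ₀ x * (g0 t) x - f x‖ ^ 2 ∂μm)
    (hM : ∀ t, M0sq t =
      ∫ x in Iᶜ, ‖ψ x + blaschkeBd N zs φ₀ x * (g0 t) x - h x‖ ^ 2 ∂μm)
    -- facts established for the bounded extremal problem, used in the proof:
    (htendE : Tendsto e (nhdsWithin (-1) (Set.Ioi (-1))) (nhds 0))
    (e' M' : ℝ → ℝ)
    (hderivE : ∀ t : ℝ, -1 < t → HasDerivAt e (e' t) t)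
    (hderivM : ∀ t : ℝ, -1 < t → HasDerivAt M0sq (M' t) t)
    (hbal : ∀ t : ℝ, -1 < t → e' t = -(t + 1) * M' t) :
    Tendsto (fun t => (t + 1) * M0sq t) (nhdsWithin (-1) (Set.Ioi (-1))) (nhds 0) ∧
    ∀ μ₀ : ℝ, -1 < μ₀ → IntegrableOn M0sq (Set.Ioc (-1) μ₀) := by
  have he₀ : ∀ t, 0 ≤ e t := fun t => (he t).symm ▸ integral_nonneg fun _ => by positivity
  have hM₀ : ∀ t, 0 ≤ M0sq t := fun t => (hM t).symm ▸ integral_nonneg fun _ => by positivity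
  obtain ⟨htend, hint⟩ := tendsto_sub_mul_nhds_zero_and_integrableOn_of_balance
    (fun t _ => he₀ t) (fun t _ => hM₀ t) htendE hderivE hderivM
    (fun t ht => by rw [hbal t ht, sub_neg_eq_add])
  simp only [sub_neg_eq_add] at htend
  exact ⟨htend, fun μ₀ _ => hint μ₀⟩

/-- Moderate growth of the deviation in the bounded extremal problem: under the BEP
hypotheses (with `f` not the trace on `I` of an admissible function), the deviation
`M₀²(μ) = ‖ψ + b g₀(μ) - h‖²_{L²(J)}` satisfies `(μ+1)·M₀²(μ) → 0` as `μ ↓ -1` and is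
integrable near `μ = -1`: `∫_{-1}^{μ₀} M₀²(μ) dμ < ∞` for every `μ₀ > -1`. -/
theorem bep_M0_integrable (N : ℕ) (zs : Fin N → ℂ)
    (hzs : ∀ j, ‖zs j‖ < 1) (φ₀ : ℝ)
    (I : Set Circ) (hIm : MeasurableSet I) (hI : 0 < μm I) (hJ : 0 < μm Iᶜ)
    (ψ : Lp ℂ 2 μm) (hψ : Hardy ψ)
    (f h : Circ → ℂ) (hf : MemLp f 2 (μm.restrict I)) (hh : MemLp h 2 (μm.restrict Iᶜ))
    (hnotrace : ¬ ∃ g : Lp ℂ 2 μm, Hardy g ∧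
      f =ᵐ[μm.restrict I] fun x => ψ x + blaschkeBd N zs φ₀ x * g x)
    (P : Lp ℂ 2 μm →L[ℂ] Lp ℂ 2 μm)
    (hPrange : ∀ u, Hardy (P u))
    (hPfix : ∀ u, Hardy u → P u = u)
    (hPorth : ∀ u g : Lp ℂ 2 μm, Hardy g → (inner ℂ (u - P u) g : ℂ) = 0)
    (φT : Lp ℂ 2 μm →L[ℂ] Lp ℂ 2 μm)
    (hφT : ∀ g, φT g = P (indLp Iᶜ hIm.compl g))
    (w : ℝ → Lp ℂ 2 μm)
    (hw : ∀ t : ℝ, ⇑(w t) =ᵐ[μm] fun x =>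
      I.indicator (fun x => conj (blaschkeBd N zs φ₀ x) * (f x - ψ x)) x +
      Iᶜ.indicator (fun x => (1 + t) * conj (blaschkeBd N zs φ₀ x) * (h x - ψ x)) x)
    (g0 : ℝ → Lp ℂ 2 μm)
    (hg0 : ∀ t : ℝ, -1 < t → g0 t + t • φT (g0 t) = P (w t))
    (e M0sq : ℝ → ℝ)
    (he : ∀ t, e t = ∫ x in I, ‖ψ x + blaschkeBd N zs φ₀ x * (g0 t) x - f x‖ ^ 2 ∂μm)
    (hM : ∀ t, M0sq t =
      ∫ x in Iᶜ, ‖ψ x + blaschkeBd N zs φ₀ x * (g0 t) x - h x‖ ^ 2 ∂μm)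
    -- facts established for the bounded extremal problem, used in the proof:
    (htendE : Tendsto e (nhdsWithin (-1) (Set.Ioi (-1))) (nhds 0))
    (hMtop : Tendsto M0sq (nhdsWithin (-1) (Set.Ioi (-1))) atTop)
    (e' M' : ℝ → ℝ)
    (hderivE : ∀ t : ℝ, -1 < t → HasDerivAt e (e' t) t)
    (hderivM : ∀ t : ℝ, -1 < t → HasDerivAt M0sq (M' t) t)
    (hbal : ∀ t : ℝ, -1 < t → e' t = -(t + 1) * M' t)
    (hopt : ∀ t : ℝ, -1 < t →
      (∫ x in I, (f x - ψ x - blaschkeBd N zs φ₀ x * (g0 t) x) *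
          conj (blaschkeBd N zs φ₀ x * (g0 t) x) ∂μm) =
        (1 + t) * (↑(M0sq t) -
          ∫ x in Iᶜ, (h x - ψ x - blaschkeBd N zs φ₀ x * (g0 t) x) *
            conj (h x - ψ x) ∂μm)) :
    Tendsto (fun t => (t + 1) * M0sq t) (nhdsWithin (-1) (Set.Ioi (-1))) (nhds 0) ∧
    ∀ μ₀ : ℝ, -1 < μ₀ → IntegrableOn M0sq (Set.Ioc (-1) μ₀) :=
  bep_M0_integrable_general N zs φ₀ I ψ f h g0 e M0sq he hM htendE e' M' hderivE hderivM hbal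
end
end
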